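/- Let a < p < b, let f : ℝ → ℝ be twice differentiable on [a,b] with f''(x) > 0 for x ∈ (a,p) and f''(x) < 0 for x ∈ (p,b), and suppose x_r ∈ (a,p) satisfies f(b) − f(x_r) − f'(x_r)·(b − x_r) = 0. Define S_r(x) = ∫_x^b f(t) dt − ((f(x)+f(b))/2)·(b−x). Then S_r is strictly increasing on [a, x_r] and strictly decreasing on [x_r, b]; in particular x_r is the unique maximizer of S_r on [a,b]. -/

import Mathlib

/-!
Twice the derivative of `S_r` at `x` is the gap `g x = f b - f x - f' x * (b - x)` between `f`
and its tangent line at `x`, evaluated at `b`. Since `g' x = -f'' x * (b - x)`, the gap strictly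
decreases on `[a, p]` and strictly increases on `[p, b]`. It vanishes at `x_r` and at `b`, so it is
positive on `[a, x_r)` and negative on `(x_r, b)`, which is the sign pattern of `S_r'`.
-/

open Set intervalIntegral MeasureTheory Topology

noncomputable section

def rightSurface (f : ℝ → ℝ) (b x : ℝ) : ℝ :=
  (∫ t in x..b, f t) - ((f x + f b) / 2) * (b - x)

def tangentDefect (f : ℝ → ℝ) (b x : ℝ) : ℝ :=
  f b - f x - deriv f x * (b - x)

end

section

variable {f : ℝ → ℝ} {a b c d x : ℝ}

theorem tangentDefect_self (f : ℝ → ℝ) (b : ℝ) : tangentDefect f b b = 0 := by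
  simp [tangentDefect]

theorem hasDerivAt_tangentDefect (hf : DifferentiableAt ℝ f x)
    (hf' : DifferentiableAt ℝ (deriv f) x) :
    HasDerivAt (tangentDefect f b) (-(deriv (deriv f) x * (b - x))) x := by
  have h := (hf.hasDerivAt.const_sub (f b)).sub
    (hf'.hasDerivAt.mul ((hasDerivAt_id x).const_sub b))
  exact h.congr_deriv (by simp only [id]; ring)

theorem continuousOn_tangentDefect {s : Set ℝ} (hf : ∀ x ∈ s, DifferentiableAt ℝ f x)
    (hf' : ∀ x ∈ s, DifferentiableAt ℝ (deriv f) x) : ContinuousOn (tangentDefect f b) s :=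
  fun x hx => ((hasDerivAt_tangentDefect (hf x hx) (hf' x hx)).continuousAt).continuousWithinAt

theorem strictAntiOn_tangentDefect (hf : ∀ x ∈ Icc c d, DifferentiableAt ℝ f x)
    (hf' : ∀ x ∈ Icc c d, DifferentiableAt ℝ (deriv f) x) (hdb : d ≤ b)
    (hpos : ∀ x ∈ Ioo c d, 0 < deriv (deriv f) x) :
    StrictAntiOn (tangentDefect f b) (Icc c d) := by
  refine strictAntiOn_of_deriv_neg (convex_Icc c d) (continuousOn_tangentDefect hf hf') ?_
  intro x hx
  rw [interior_Icc] at hx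
  rw [(hasDerivAt_tangentDefect (hf x (Ioo_subset_Icc_self hx))
    (hf' x (Ioo_subset_Icc_self hx))).deriv, neg_neg_iff_pos]
  exact mul_pos (hpos x hx) (sub_pos.2 (hx.2.trans_le hdb))

theorem strictMonoOn_tangentDefect (hf : ∀ x ∈ Icc c d, DifferentiableAt ℝ f x)
    (hf' : ∀ x ∈ Icc c d, DifferentiableAt ℝ (deriv f) x) (hdb : d ≤ b)
    (hneg : ∀ x ∈ Ioo c d, deriv (deriv f) x < 0) :
    StrictMonoOn (tangentDefect f b) (Icc c d) := by
  refine strictMonoOn_of_deriv_pos (convex_Icc c d) (continuousOn_tangentDefect hf hf') ?_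
  intro x hx
  rw [interior_Icc] at hx
  rw [(hasDerivAt_tangentDefect (hf x (Ioo_subset_Icc_self hx))
    (hf' x (Ioo_subset_Icc_self hx))).deriv, neg_pos]
  exact mul_neg_of_neg_of_pos (hneg x hx) (sub_pos.2 (hx.2.trans_le hdb))

theorem hasDerivAt_rightSurface (hint : IntervalIntegrable f volume x b)
    (hmeas : StronglyMeasurableAtFilter f (𝓝 x)) (hf : DifferentiableAt ℝ f x) :
    HasDerivAt (rightSurface f b) (tangentDefect f b x / 2) x := by
  have hchord : HasDerivAt (fun u => ((f u + f b) / 2) * (b - u))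
      ((deriv f x / 2) * (b - x) + ((f x + f b) / 2) * (-1)) x := by
    have hlin : HasDerivAt (fun u => b - u) (-1) x := by
      simpa using (hasDerivAt_id x).const_sub b
    exact ((hf.hasDerivAt.add_const (f b)).div_const 2).mul hlin
  refine ((integral_hasDerivAt_left hint hmeas hf.continuousAt).sub hchord).congr_deriv ?_
  simp only [tangentDefect]
  ring

theorem continuousOn_rightSurface (hf : ContinuousOn f (uIcc a b)) :
    ContinuousOn (rightSurface f b) (uIcc a b) := by
  have hprim := continuousOn_primitive_interval_left (μ := volume) hf.integrableOn_uIcc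
  exact hprim.sub (((hf.add continuousOn_const).div_const 2).mul
    (continuousOn_const.sub continuousOn_id))

theorem hasDerivAt_rightSurface_of_mem_Ioo (hf : ∀ x ∈ Icc c b, DifferentiableAt ℝ f x)
    (hx : x ∈ Ioo c b) : HasDerivAt (rightSurface f b) (tangentDefect f b x / 2) x := by
  have hcont : ContinuousOn f (Icc c b) := fun y hy => (hf y hy).continuousAt.continuousWithinAt
  refine hasDerivAt_rightSurface ?_ ?_ (hf x (Ioo_subset_Icc_self hx))
  · refine (hcont.mono (uIcc_subset_Icc (Ioo_subset_Icc_self hx) ?_)).intervalIntegrable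
    exact ⟨hx.1.le.trans hx.2.le, le_rfl⟩
  · exact (hcont.mono Ioo_subset_Icc_self).stronglyMeasurableAtFilter isOpen_Ioo x hx

theorem continuousOn_rightSurface_Icc (hf : ∀ x ∈ Icc c b, DifferentiableAt ℝ f x)
    (hdb : d ≤ b) : ContinuousOn (rightSurface f b) (Icc c d) := by
  rcases le_or_gt c b with hcb | hbc
  · have hcont : ContinuousOn f (uIcc c b) := by
      rw [uIcc_of_le hcb]
      exact fun y hy => (hf y hy).continuousAt.continuousWithinAt
    refine (continuousOn_rightSurface hcont).mono ?_
    rw [uIcc_of_le hcb]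
    exact Icc_subset_Icc le_rfl hdb
  · rw [Icc_eq_empty (by linarith)]
    exact continuousOn_empty _

theorem strictMonoOn_rightSurface (hf : ∀ x ∈ Icc c b, DifferentiableAt ℝ f x) (hdb : d ≤ b)
    (hg : ∀ x ∈ Ioo c d, 0 < tangentDefect f b x) :
    StrictMonoOn (rightSurface f b) (Icc c d) := by
  refine strictMonoOn_of_deriv_pos (convex_Icc c d) (continuousOn_rightSurface_Icc hf hdb) ?_
  intro x hx
  rw [interior_Icc] at hx
  rw [(hasDerivAt_rightSurface_of_mem_Ioo hf ⟨hx.1, hx.2.trans_le hdb⟩).deriv]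
  exact half_pos (hg x hx)

theorem strictAntiOn_rightSurface (hf : ∀ x ∈ Icc c b, DifferentiableAt ℝ f x) (hdb : d ≤ b)
    (hg : ∀ x ∈ Ioo c d, tangentDefect f b x < 0) :
    StrictAntiOn (rightSurface f b) (Icc c d) := by
  refine strictAntiOn_of_deriv_neg (convex_Icc c d) (continuousOn_rightSurface_Icc hf hdb) ?_
  intro x hx
  rw [interior_Icc] at hx
  rw [(hasDerivAt_rightSurface_of_mem_Ioo hf ⟨hx.1, hx.2.trans_le hdb⟩).deriv]
  exact div_neg_of_neg_of_pos (hg x hx) two_pos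

end

theorem neg_of_strictAntiOn_of_strictMonoOn {g : ℝ → ℝ} {a p b x₀ : ℝ}
    (hanti : StrictAntiOn g (Icc a p)) (hmono : StrictMonoOn g (Icc p b)) (hx₀ : x₀ ∈ Icc a p)
    (hgx₀ : g x₀ = 0) (hgb : g b = 0) : ∀ x ∈ Ioo x₀ b, g x < 0 := by
  intro x hx
  rcases le_or_gt x p with hxp | hpx
  · exact hgx₀ ▸ hanti hx₀ ⟨hx₀.1.trans hx.1.le, hxp⟩ hx.1
  · exact hgb ▸ hmono ⟨hpx.le, hx.2.le⟩ ⟨hpx.le.trans hx.2.le, le_rfl⟩ hx.2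

theorem lt_of_strictMonoOn_of_strictAntiOn {g : ℝ → ℝ} {a m b : ℝ}
    (hmono : StrictMonoOn g (Icc a m)) (hanti : StrictAntiOn g (Icc m b)) (hm : m ∈ Icc a b) :
    ∀ x ∈ Icc a b, x ≠ m → g x < g m := by
  intro x hx hxm
  rcases hxm.lt_or_gt with hlt | hgt
  · exact hmono ⟨hx.1, hlt.le⟩ ⟨hm.1, le_rfl⟩ hlt
  · exact hanti ⟨le_rfl, hm.2⟩ ⟨hgt.le, hx.2⟩ hgt

/-- For a convex/concave `f` on `[a,b]` with inflection point `p` (`f'' > 0` on `(a,p)`,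
`f'' < 0` on `(p,b)`) and right tangency point `x_r ∈ (a,p)`
(i.e. `f(b) − f(x_r) − f'(x_r)·(b − x_r) = 0`), the right-surface
`S_r(x) = ∫_x^b f(t) dt − ((f(x)+f(b))/2)·(b−x)` is strictly increasing on `[a, x_r]`
and strictly decreasing on `[x_r, b]`; in particular `x_r` is the unique maximizer of
`S_r` on `[a,b]`. -/
theorem right_surface_max_at_right_tangency (a b p xr : ℝ) (hap : a < p) (hpb : p < b)
    (f : ℝ → ℝ)
    (hd1 : ∀ x ∈ Set.Icc a b, DifferentiableAt ℝ f x)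
    (hd2 : ∀ x ∈ Set.Icc a b, DifferentiableAt ℝ (deriv f) x)
    (hpos : ∀ x ∈ Set.Ioo a p, 0 < deriv (deriv f) x)
    (hneg : ∀ x ∈ Set.Ioo p b, deriv (deriv f) x < 0)
    (hxr : xr ∈ Set.Ioo a p)
    (heq : f b - f xr - deriv f xr * (b - xr) = 0) :
    StrictMonoOn (fun x => (∫ t in x..b, f t) - ((f x + f b) / 2) * (b - x))
      (Set.Icc a xr) ∧
    StrictAntiOn (fun x => (∫ t in x..b, f t) - ((f x + f b) / 2) * (b - x))
      (Set.Icc xr b) ∧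
    ∀ x ∈ Set.Icc a b, x ≠ xr →
      ((∫ t in x..b, f t) - ((f x + f b) / 2) * (b - x)) <
        ((∫ t in xr..b, f t) - ((f xr + f b) / 2) * (b - xr)) := by
  have hxr' : xr ∈ Icc a p := Ioo_subset_Icc_self hxr
  have hsub_left : Icc a p ⊆ Icc a b := Icc_subset_Icc le_rfl hpb.le
  have hsub_right : Icc p b ⊆ Icc a b := Icc_subset_Icc hap.le le_rfl
  have hanti_g : StrictAntiOn (tangentDefect f b) (Icc a p) :=
    strictAntiOn_tangentDefect (fun x hx => hd1 x (hsub_left hx)) (fun x hx => hd2 x (hsub_left hx))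
      hpb.le hpos
  have hmono_g : StrictMonoOn (tangentDefect f b) (Icc p b) :=
    strictMonoOn_tangentDefect (fun x hx => hd1 x (hsub_right hx))
      (fun x hx => hd2 x (hsub_right hx)) le_rfl hneg
  have hg_pos : ∀ x ∈ Ioo a xr, 0 < tangentDefect f b x := fun x hx =>
    heq ▸ hanti_g ⟨hx.1.le, hx.2.le.trans hxr'.2⟩ hxr' hx.2
  have hg_neg : ∀ x ∈ Ioo xr b, tangentDefect f b x < 0 :=
    neg_of_strictAntiOn_of_strictMonoOn hanti_g hmono_g hxr' heq (tangentDefect_self f b)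
  have hmono : StrictMonoOn (rightSurface f b) (Icc a xr) :=
    strictMonoOn_rightSurface hd1 (hxr.2.trans hpb).le hg_pos
  have hanti : StrictAntiOn (rightSurface f b) (Icc xr b) :=
    strictAntiOn_rightSurface (fun x hx => hd1 x ⟨hxr.1.le.trans hx.1, hx.2⟩) le_rfl hg_neg
  exact ⟨hmono, hanti,
    lt_of_strictMonoOn_of_strictAntiOn hmono hanti ⟨hxr.1.le, (hxr.2.trans hpb).le⟩⟩
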